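/- Let H be a connected finite simple graph of order n ≥ 2. Then dim_s(H) ≤ n − ϖ(H). -/

import Mathlib

open SimpleGraph

/-- A vertex `w` strongly resolves the pair `u`, `v` if `v` lies on some shortest `u`–`w`
path or `u` lies on some shortest `v`–`w` path. -/
def StronglyResolves {V : Type*} (G : SimpleGraph V) (w u v : V) : Prop :=
  G.dist u w = G.dist u v + G.dist v w ∨ G.dist v w = G.dist v u + G.dist u w

/-- `S` is a strong resolving set for `G` if every pair of distinct vertices is strongly
resolved by some vertex of `S`. -/
def IsStrongResolvingSet {V : Type*} (G : SimpleGraph V) (S : Set V) : Prop :=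
  ∀ u v : V, u ≠ v → ∃ w ∈ S, StronglyResolves G w u v

/-- The strong metric dimension: the minimum cardinality of a strong resolving set. -/
noncomputable def strongDim {V : Type*} (G : SimpleGraph V) [Fintype V] : ℕ :=
  sInf {k | ∃ S : Finset V, IsStrongResolvingSet G ↑S ∧ S.card = k}

/-- The closed neighborhood of a vertex. -/
def closedNbhd {V : Type*} (G : SimpleGraph V) (v : V) : Set V :=
  insert v (G.neighborSet v)

/-- A twin-free clique: a clique containing no pair of true twins. -/
def IsTwinFreeClique {V : Type*} (G : SimpleGraph V) (X : Finset V) : Prop :=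
  G.IsClique ↑X ∧ ∀ u ∈ X, ∀ v ∈ X, u ≠ v → closedNbhd G u ≠ closedNbhd G v

/-- The twin-free clique number: maximum cardinality of a twin-free clique. -/
noncomputable def twinFreeCliqueNum {V : Type*} (G : SimpleGraph V) [Fintype V] : ℕ :=
  sSup {k | ∃ X : Finset V, IsTwinFreeClique G X ∧ X.card = k}

/-- Adjacency relation of the join of two graphs. -/
def joinAdj {V W : Type*} (G : SimpleGraph V) (H : SimpleGraph W) :
    V ⊕ W → V ⊕ W → Prop
  | Sum.inl a, Sum.inl b => G.Adj a b
  | Sum.inr a, Sum.inr b => H.Adj a b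
  | Sum.inl _, Sum.inr _ => True
  | Sum.inr _, Sum.inl _ => True

/-- The join `G + H`: disjoint union of `G` and `H` plus all edges between them. -/
def joinGraph {V W : Type*} (G : SimpleGraph V) (H : SimpleGraph W) :
    SimpleGraph (V ⊕ W) where
  Adj := joinAdj G H
  symm := ⟨by
    rintro (a | a) (b | b) h
    · exact G.adj_symm h
    · trivial
    · trivial
    · exact H.adj_symm h⟩
  loopless := ⟨by
    rintro (a | a) h
    · exact G.loopless.irrefl a h
    · exact H.loopless.irrefl a h⟩

/-- Adjacency relation of the corona product `G ⊙ H`. -/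
def coronaAdj {V W : Type*} (G : SimpleGraph V) (H : SimpleGraph W) :
    V ⊕ V × W → V ⊕ V × W → Prop
  | Sum.inl a, Sum.inl b => G.Adj a b
  | Sum.inr p, Sum.inr q => p.1 = q.1 ∧ H.Adj p.2 q.2
  | Sum.inl a, Sum.inr q => a = q.1
  | Sum.inr p, Sum.inl b => p.1 = b

/-- The corona product `G ⊙ H`: one copy of `G` and one copy of `H` for each vertex of
`G`, with the `i`-th vertex of `G` joined to every vertex of the `i`-th copy of `H`. -/
def corona {V W : Type*} (G : SimpleGraph V) (H : SimpleGraph W) :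
    SimpleGraph (V ⊕ V × W) where
  Adj := coronaAdj G H
  symm := ⟨by
    rintro (a | p) (b | q) h
    · exact G.adj_symm h
    · exact h.symm
    · exact h.symm
    · exact ⟨h.1.symm, H.adj_symm h.2⟩⟩
  loopless := ⟨by
    rintro (a | p) h
    · exact G.loopless.irrefl a h
    · exact H.loopless.irrefl p.2 h.2⟩

/-- The disjoint union of copies of `H`, one copy for each element of `V`. -/
def copies (V : Type*) {W : Type*} (H : SimpleGraph W) : SimpleGraph (V × W) where
  Adj p q := p.1 = q.1 ∧ H.Adj p.2 q.2
  symm := ⟨fun _ _ h => ⟨h.1.symm, h.2.symm⟩⟩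
  loopless := ⟨fun p h => H.loopless.irrefl p.2 h.2⟩

/-- The algebraic connectivity: the second smallest eigenvalue (with multiplicity,
in nondecreasing order) of the Laplacian matrix. -/
noncomputable def algebraicConnectivity {V : Type*} (G : SimpleGraph V) [Fintype V]
    [DecidableEq V] [DecidableRel G.Adj] : ℝ :=
  (((Finset.univ.val.map ((G.posSemidef_lapMatrix ℝ).isHermitian.eigenvalues)).sort
    (· ≤ ·)).getD 1 0)

/-!
Take a twin-free clique `X` of maximum size; its complement is a strong resolving set. A pair
with a vertex `u` outside `X` is resolved by `u` itself. Two vertices `u, v ∈ X` are adjacent but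
not twins, so some `w` is, say, in `N[u] \ N[v]`; then `w ∉ X` and `d(v, w) = 2`, so `u` lies on
a shortest `v`–`w` path.
-/

open Finset

lemma mem_closedNbhd {V : Type*} {G : SimpleGraph V} {v w : V} :
    w ∈ closedNbhd G v ↔ w = v ∨ G.Adj v w := by
  simp [closedNbhd]

lemma SimpleGraph.IsClique.subset_closedNbhd {V : Type*} {G : SimpleGraph V} {X : Set V}
    (hX : G.IsClique X) {v : V} (hv : v ∈ X) : X ⊆ closedNbhd G v := by
  intro w hw
  rw [mem_closedNbhd]
  by_cases hwv : w = v
  · exact .inl hwv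
  · exact .inr (hX hv hw (Ne.symm hwv))

lemma SimpleGraph.dist_eq_two_of_adj_of_adj {V : Type*} {G : SimpleGraph V} {u v w : V}
    (hvu : G.Adj v u) (huw : G.Adj u w) (hvw : v ≠ w) (hnadj : ¬ G.Adj v w) :
    G.dist v w = 2 := by
  have h : G.edist v w = 2 :=
    edist_eq_two_iff.mpr ⟨hvw, hnadj, ⟨u, (mem_commonNeighbors G).mpr ⟨hvu, huw.symm⟩⟩⟩
  simp [SimpleGraph.dist, h]

section StronglyResolves

variable {V : Type*} {G : SimpleGraph V}

lemma StronglyResolves.symm {w u v : V} (h : StronglyResolves G w u v) :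
    StronglyResolves G w v u :=
  Or.symm h

lemma stronglyResolves_self_left (u v : V) : StronglyResolves G u u v :=
  .inr (by simp)

lemma stronglyResolves_self_right (u v : V) : StronglyResolves G v u v :=
  .inl (by simp)

lemma stronglyResolves_of_mem_closedNbhd_of_notMem {u v w : V} (huv : G.Adj u v)
    (hwu : w ∈ closedNbhd G u) (hwv : w ∉ closedNbhd G v) : StronglyResolves G w u v := by
  simp only [mem_closedNbhd, not_or] at hwu hwv
  obtain ⟨hwv, hnadj⟩ := hwv
  have huw : G.Adj u w := hwu.resolve_left (by rintro rfl; exact hnadj huv.symm)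
  right
  rw [dist_eq_two_of_adj_of_adj huv.symm huw (Ne.symm hwv) hnadj,
    dist_eq_one_iff_adj.mpr huv.symm, dist_eq_one_iff_adj.mpr huw]

end StronglyResolves

lemma IsStrongResolvingSet.strongDim_le {V : Type*} [Fintype V] {G : SimpleGraph V}
    {S : Finset V} (hS : IsStrongResolvingSet G ↑S) : strongDim G ≤ #S :=
  Nat.sInf_le ⟨S, hS, rfl⟩

lemma exists_isTwinFreeClique_card_eq {V : Type*} [Fintype V] (G : SimpleGraph V) :
    ∃ X : Finset V, IsTwinFreeClique G X ∧ #X = twinFreeCliqueNum G :=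
  Nat.sSup_mem (s := {k | ∃ X : Finset V, IsTwinFreeClique G X ∧ #X = k})
    ⟨0, ∅, ⟨by simp, by simp⟩, rfl⟩
    ⟨Fintype.card V, by rintro k ⟨X, -, rfl⟩; exact X.card_le_univ⟩

lemma IsTwinFreeClique.isStrongResolvingSet_compl {V : Type*} [Fintype V] [DecidableEq V]
    {G : SimpleGraph V} {X : Finset V} (hX : IsTwinFreeClique G X) :
    IsStrongResolvingSet G ↑Xᶜ := by
  intro u v huv
  by_cases hu : u ∈ X
  swap
  · exact ⟨u, by simpa using hu, stronglyResolves_self_left u v⟩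
  by_cases hv : v ∈ X
  swap
  · exact ⟨v, by simpa using hv, stronglyResolves_self_right u v⟩
  have hcompl {x w : V} (hx : x ∈ X) (hwx : w ∉ closedNbhd G x) : w ∈ (↑Xᶜ : Set V) := by
    simpa using fun hw => hwx (hX.1.subset_closedNbhd (mem_coe.mpr hx) (mem_coe.mpr hw))
  have hadj : G.Adj u v := hX.1 (mem_coe.mpr hu) (mem_coe.mpr hv) huv
  obtain ⟨w, hw⟩ : ∃ w, ¬ (w ∈ closedNbhd G u ↔ w ∈ closedNbhd G v) :=
    not_forall.mp fun h => hX.2 u hu v hv huv (Set.ext h)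
  by_cases hwu : w ∈ closedNbhd G u
  · have hwv : w ∉ closedNbhd G v := fun hwv => hw (iff_of_true hwu hwv)
    exact ⟨w, hcompl hv hwv, stronglyResolves_of_mem_closedNbhd_of_notMem hadj hwu hwv⟩
  · have hwv : w ∈ closedNbhd G v := (not_iff.mp hw).mp hwu
    exact ⟨w, hcompl hu hwu,
      (stronglyResolves_of_mem_closedNbhd_of_notMem hadj.symm hwv hwu).symm⟩

theorem strongDim_le_card_sub_twinFreeCliqueNum_general {V : Type*} [Fintype V]
    (H : SimpleGraph V) :
    strongDim H ≤ Fintype.card V - twinFreeCliqueNum H := by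
  classical
  obtain ⟨X, hX, hcard⟩ := exists_isTwinFreeClique_card_eq H
  calc strongDim H ≤ #Xᶜ := hX.isStrongResolvingSet_compl.strongDim_le
    _ = Fintype.card V - twinFreeCliqueNum H := by rw [card_compl, hcard]

/-- Let `H` be a connected finite simple graph of order `n ≥ 2`.
Then `dim_s(H) ≤ n − ϖ(H)`. -/
theorem strongDim_le_card_sub_twinFreeCliqueNum {V : Type*} [Fintype V]
    (H : SimpleGraph V) (hconn : H.Connected) (hn : 2 ≤ Fintype.card V) :
    strongDim H ≤ Fintype.card V - twinFreeCliqueNum H :=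
  strongDim_le_card_sub_twinFreeCliqueNum_general H
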